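/- arXiv:2407.18190 — 3 statements merged into one kernel-verified Lean document; each statement's English description precedes it below -/
import Mathlib

section
/- Let C be a category with binary coproducts and the relevant coequalizers. Suppose given a coequalizer diagram consisting of parallel maps l_R, r_R : R¹ → R⁰ with coequalizer π : R⁰ → R, together with morphisms l_Q : Q¹ → Q⁰, r_Q : Q¹ → Q⁰ ⨿ R⁰ and ε : Q⁰ → R⁰. Assume there is a section ξ : Q⁰ → Q¹ of l_Q (i.e. l_Q ∘ ξ = id) such that r_Q ∘ ξ equals ε followed by the coproduct inclusion R⁰ → Q⁰ ⨿ R⁰, and such that ⟨π∘ε, π⟩ ∘ r_Q = π ∘ ε ∘ l_Q, where ⟨π∘ε, π⟩ : Q⁰ ⨿ R⁰ → R is induced by π∘ε and π. Then the fork with parallel maps l_Q ⨿ l_R : Q¹ ⨿ R¹ → Q⁰ ⨿ R⁰ and the map Q¹ ⨿ R¹ → Q⁰ ⨿ R⁰ induced by r_Q and (coproduct inclusion ∘ r_R), together with the projection ⟨π∘ε, π⟩ : Q⁰ ⨿ R⁰ → R, is again a coequalizer diagram. -/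
open CategoryTheory CategoryTheory.Limits

universe v u

/-! The section `ξ` forces every cofork `t` of the extended pair to satisfy
`inl ≫ t = ε ≫ inr ≫ t`, so `t` is determined by `inr ≫ t`, which is a cofork of `(l_R, r_R)`
and hence factors uniquely through `π`. -/

section

variable {C : Type u} [Category.{v} C] [HasBinaryCoproducts C] {Q1 Q0 R1 R0 W : C}
  {lQ : Q1 ⟶ Q0} {rQ : Q1 ⟶ Q0 ⨿ R0}

lemma coprod_map_comp_eq_desc_comp_iff {lR rR : R1 ⟶ R0} {t : Q0 ⨿ R0 ⟶ W} :
    coprod.map lQ lR ≫ t = coprod.desc rQ (rR ≫ coprod.inr) ≫ t ↔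
      lQ ≫ coprod.inl ≫ t = rQ ≫ t ∧ lR ≫ coprod.inr ≫ t = rR ≫ coprod.inr ≫ t := by
  constructor
  · intro h
    exact ⟨by simpa [coprod.inl_desc] using coprod.inl ≫= h,
      by simpa [coprod.inr_desc] using coprod.inr ≫= h⟩
  · rintro ⟨hl, hr⟩
    ext <;> simpa [coprod.inl_desc, coprod.inr_desc]

lemma coprod_inl_comp_eq_of_section {ε : Q0 ⟶ R0} {ξ : Q0 ⟶ Q1} (hξ : ξ ≫ lQ = 𝟙 Q0)
    (hξr : ξ ≫ rQ = ε ≫ coprod.inr) {t : Q0 ⨿ R0 ⟶ W} (ht : lQ ≫ coprod.inl ≫ t = rQ ≫ t) :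
    coprod.inl ≫ t = ε ≫ coprod.inr ≫ t := calc
  coprod.inl ≫ t = ξ ≫ lQ ≫ coprod.inl ≫ t := by rw [reassoc_of% hξ]
  _ = ξ ≫ rQ ≫ t := by rw [ht]
  _ = ε ≫ coprod.inr ≫ t := by rw [reassoc_of% hξr]

end

/-- Lemma 3.15: extending a coequalizer by a retractable summand.

Given a coequalizer `π : R⁰ ⟶ R` of the parallel pair `l_R, r_R : R¹ ⟶ R⁰`, maps
`l_Q : Q¹ ⟶ Q⁰`, `r_Q : Q¹ ⟶ Q⁰ ⨿ R⁰`, `ε : Q⁰ ⟶ R⁰`, and a section `ξ` of `l_Q`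
satisfying the stated compatibilities, the fork with parallel maps
`l_Q ⨿ l_R : Q¹ ⨿ R¹ ⟶ Q⁰ ⨿ R⁰` and `(r_Q, inr ∘ r_R)`, together with
`⟨π ∘ ε, π⟩ : Q⁰ ⨿ R⁰ ⟶ R`, is again a coequalizer. -/
theorem stmt0 {C : Type u} [Category.{v} C] [HasBinaryCoproducts C]
    {Q1 Q0 R1 R0 R : C}
    (lR rR : R1 ⟶ R0) (π : R0 ⟶ R) (wR : lR ≫ π = rR ≫ π)
    (hπ : IsColimit (Cofork.ofπ π wR))
    (lQ : Q1 ⟶ Q0) (rQ : Q1 ⟶ Q0 ⨿ R0) (ε : Q0 ⟶ R0)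
    (ξ : Q0 ⟶ Q1) (hξ : ξ ≫ lQ = 𝟙 Q0)
    (hξr : ξ ≫ rQ = ε ≫ coprod.inr)
    (hcomm : rQ ≫ coprod.desc (ε ≫ π) π = lQ ≫ ε ≫ π) :
    Nonempty (IsColimit (Cofork.ofπ (f := coprod.map lQ lR)
      (g := coprod.desc rQ (rR ≫ coprod.inr))
      (coprod.desc (ε ≫ π) π)
      (by
        apply coprod.hom_ext
        · simp only [coprod.map_desc, coprod.desc_comp, coprod.inl_desc]; exact hcomm.symm
        · simp only [coprod.map_desc, coprod.desc_comp, coprod.inr_desc, Category.assoc]; exact wR))) := by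
  have : Epi π := Cofork.IsColimit.epi hπ
  refine ⟨Cofork.IsColimit.mk' _ fun s => ?_⟩
  obtain ⟨hQ, hR⟩ := coprod_map_comp_eq_desc_comp_iff.1 s.condition
  obtain ⟨d, hd : π ≫ d = coprod.inr ≫ s.π⟩ := Cofork.IsColimit.desc' hπ _ hR
  refine ⟨d, ?_, fun {m} hm => ?_⟩
  · ext
    · simp [coprod.inl_desc, hd, coprod_inl_comp_eq_of_section hξ hξr hQ]
    · simp [coprod.inr_desc, hd]
  · rw [← cancel_epi π, hd]
    simpa [coprod.inr_desc] using coprod.inr ≫= hm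
end

section
/- Let M be a model category and K a class of objects of M. Say that M is K-left proper if for every weak equivalence f : X → Y with X, Y ∈ K and every cofibration g : X → Z, the cobase change Z → Z ⊔_X Y of f along g is a weak equivalence. Then M is K-left proper if and only if for every weak equivalence f : X → Y between objects of K, the adjunction f_! : X ↓ M ⇄ Y ↓ M : f^* — where f^* is precomposition with f and its left adjoint f_! is cobase change along f — is a Quillen equivalence. -/
open CategoryTheory CategoryTheory.Limits

universe w v u

/-- `f` is a retract of `g` in the category of arrows. -/
def IsRetractOf {C : Type u} [Category.{v} C] {X Y X' Y' : C}
    (f : X ⟶ Y) (g : X' ⟶ Y') : Prop :=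
  ∃ (i : X ⟶ X') (r : X' ⟶ X) (i' : Y ⟶ Y') (r' : Y' ⟶ Y),
    i ≫ r = 𝟙 X ∧ i' ≫ r' = 𝟙 Y ∧ i ≫ g = f ≫ i' ∧ g ≫ r' = r ≫ f

/-- A (Quillen) model structure on a category: classes of weak equivalences, cofibrations
and fibrations, satisfying two-out-of-three, retract closure, lifting and factorization
axioms.  Together with bicompleteness (imposed separately) this is a model category. -/
class ModelStruct (C : Type u) [Category.{v} C] where
  weq : MorphismProperty C
  cof : MorphismProperty C
  fib : MorphismProperty C
  weq_comp : ∀ {X Y Z : C} (f : X ⟶ Y) (g : Y ⟶ Z), weq f → weq g → weq (f ≫ g)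
  weq_cancel_left : ∀ {X Y Z : C} (f : X ⟶ Y) (g : Y ⟶ Z), weq f → weq (f ≫ g) → weq g
  weq_cancel_right : ∀ {X Y Z : C} (f : X ⟶ Y) (g : Y ⟶ Z), weq g → weq (f ≫ g) → weq f
  weq_retract : ∀ {X Y X' Y' : C} {f : X ⟶ Y} {g : X' ⟶ Y'}, IsRetractOf f g → weq g → weq f
  cof_retract : ∀ {X Y X' Y' : C} {f : X ⟶ Y} {g : X' ⟶ Y'}, IsRetractOf f g → cof g → cof f
  fib_retract : ∀ {X Y X' Y' : C} {f : X ⟶ Y} {g : X' ⟶ Y'}, IsRetractOf f g → fib g → fib f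
  lift_cof_afib : ∀ {A B X Y : C} (i : A ⟶ B) (p : X ⟶ Y),
    cof i → fib p → weq p → HasLiftingProperty i p
  lift_acof_fib : ∀ {A B X Y : C} (i : A ⟶ B) (p : X ⟶ Y),
    cof i → weq i → fib p → HasLiftingProperty i p
  factor_cof_afib : ∀ {X Y : C} (f : X ⟶ Y),
    ∃ (Z : C) (i : X ⟶ Z) (p : Z ⟶ Y), cof i ∧ fib p ∧ weq p ∧ i ≫ p = f
  factor_acof_fib : ∀ {X Y : C} (f : X ⟶ Y),
    ∃ (Z : C) (i : X ⟶ Z) (p : Z ⟶ Y), cof i ∧ weq i ∧ fib p ∧ i ≫ p = f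

section Aux

open ModelStruct

variable {C : Type u} [Category.{v} C] [ModelStruct C]

lemma weq_id (X : C) : ModelStruct.weq (𝟙 X) := by
  obtain ⟨Z, i, p, hc, hfib, hw, hip⟩ := ModelStruct.factor_cof_afib (𝟙 X)
  exact weq_retract ⟨i, p, 𝟙 X, 𝟙 X, hip, by simp, by simp [hip], by simp⟩ hw

lemma weq_of_isIso {X Y : C} (f : X ⟶ Y) [IsIso f] : ModelStruct.weq f :=
  ModelStruct.weq_retract (g := 𝟙 X)
    ⟨𝟙 X, 𝟙 X, inv f, f, by simp, by simp, by simp, by simp⟩ (weq_id X)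

lemma llp_of_isPushout {Z X Y P : C} {f : Z ⟶ X} {g : Z ⟶ Y} {h : X ⟶ P} {i : Y ⟶ P}
    (H : IsPushout f g h i) {Q R : C} (p : Q ⟶ R)
    (hl : HasLiftingProperty f p) : HasLiftingProperty i p := by
  constructor
  intro t b sq
  have sq' : CommSq (g ≫ t) f p (h ≫ b) := ⟨by
    rw [Category.assoc, sq.w, ← Category.assoc, ← H.w, Category.assoc]⟩
  obtain ⟨⟨L, hL1, hL2⟩⟩ := hl.sq_hasLift sq'
  refine ⟨⟨⟨H.desc L t hL1, H.inr_desc _ _ _, ?_⟩⟩⟩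
  apply H.hom_ext
  · rw [← Category.assoc, H.inl_desc, hL2]
  · rw [← Category.assoc, H.inr_desc, sq.w]

lemma cof_of_isPushout {Z X Y P : C} {f : Z ⟶ X} {g : Z ⟶ Y} {h : X ⟶ P} {i : Y ⟶ P}
    (H : IsPushout f g h i) (hf : ModelStruct.cof f) : ModelStruct.cof i := by
  obtain ⟨W, c, q, hc, hqf, hqw, hcq⟩ := ModelStruct.factor_cof_afib i
  have hlift : HasLiftingProperty i q :=
    llp_of_isPushout H q (ModelStruct.lift_cof_afib f q hf hqf hqw)
  have sq : CommSq c i q (𝟙 P) := ⟨by simp [hcq]⟩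
  obtain ⟨⟨l, hl1, hl2⟩⟩ := hlift.sq_hasLift sq
  refine ModelStruct.cof_retract (g := c) ⟨𝟙 Y, 𝟙 Y, l, q, by simp, by simpa using hl2,
    by simp [hl1], by simp [hcq]⟩ hc

lemma acof_of_isPushout {Z X Y P : C} {f : Z ⟶ X} {g : Z ⟶ Y} {h : X ⟶ P} {i : Y ⟶ P}
    (H : IsPushout f g h i) (hf : ModelStruct.cof f) (hfw : ModelStruct.weq f) :
    ModelStruct.cof i ∧ ModelStruct.weq i := by
  obtain ⟨W, c, q, hc, hcw, hqf, hcq⟩ := ModelStruct.factor_acof_fib i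
  have hlift : HasLiftingProperty i q :=
    llp_of_isPushout H q (ModelStruct.lift_acof_fib f q hf hfw hqf)
  have sq : CommSq c i q (𝟙 P) := ⟨by simp [hcq]⟩
  obtain ⟨⟨l, hl1, hl2⟩⟩ := hlift.sq_hasLift sq
  have hret : IsRetractOf i c := ⟨𝟙 Y, 𝟙 Y, l, q, by simp, by simpa using hl2,
    by simp [hl1], by simp [hcq]⟩
  exact ⟨ModelStruct.cof_retract hret hc, ModelStruct.weq_retract hret hcw⟩

lemma map_isPushout {M : Type u} [Category.{v} M] [HasColimits M] {X Y : M} (f : X ⟶ Y)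
    {A A' : Under X} (a : A ⟶ A') :
    IsPushout a.right (pushout.inl A.hom f) (pushout.inl A'.hom f)
      ((Under.pushout f).map a).right := by
  have h1 : IsPushout A.hom f (pushout.inl A.hom f) (pushout.inr A.hom f) :=
    IsPushout.of_hasPushout _ _
  have h2 : IsPushout A'.hom f (pushout.inl A'.hom f) (pushout.inr A'.hom f) :=
    IsPushout.of_hasPushout _ _
  have hw : A.hom ≫ a.right = A'.hom := Under.w a
  have hm : ((Under.pushout f).map a).right =
      pushout.desc (a.right ≫ pushout.inl A'.hom f) (pushout.inr A'.hom f)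
        (by rw [← Category.assoc, hw, pushout.condition]) := by
    apply pushout.hom_ext <;> simp [Under.pushout]
  have hs : IsPushout (A.hom ≫ a.right) f (pushout.inl A'.hom f)
      (pushout.inr A.hom f ≫ ((Under.pushout f).map a).right) := by
    rw [hw, hm]
    convert h2 using 1
    exact pushout.inr_desc _ _ _
  refine IsPushout.of_left hs ?_ h1
  rw [hm]; exact (pushout.inl_desc (a.right ≫ pushout.inl A'.hom f) (pushout.inr A'.hom f) _).symm

lemma adjunct_right {M : Type u} [Category.{v} M] [HasColimits M] {X Y : M} (f : X ⟶ Y)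
    (A : Under X) (B : Under Y) (g : (Under.pushout f).obj A ⟶ B) :
    ((((Under.mapPushoutAdj f).homEquiv A B) g).right : A.right ⟶ B.right) =
      pushout.inl A.hom f ≫ g.right := by
  simp [Under.mapPushoutAdj, Adjunction.mkOfHomEquiv_homEquiv]
  rfl

end Aux

section GObjects

variable {V : Type u} [Category.{v} V] [ModelStruct V]

/-- Lemma 4.28, Rezk: a model category `M` is left proper relative to a
class of objects `K` (i.e. weak equivalences between objects of `K` are stable under
cobase change along cofibrations) if and only if for every weak equivalence `f : X ⟶ Y`
between objects of `K` the adjunction `f_! : X ↓ M ⇄ Y ↓ M : f^*` (cobase change along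
`f`, right adjoint given by precomposition with `f`) is a Quillen equivalence, where the
under categories carry the model structures in which weak equivalences, cofibrations and
fibrations are detected by the underlying morphisms in `M`. -/
theorem stmt3 {M : Type u} [Category.{v} M] [HasLimits M] [HasColimits M] [ModelStruct M]
    (K : Set M) :
    -- `M` is `K`-left proper:
    (∀ ⦃X Y Z : M⦄ (f : X ⟶ Y) (g : X ⟶ Z), X ∈ K → Y ∈ K →
        ModelStruct.weq f → ModelStruct.cof g → ModelStruct.weq (pushout.inr f g))
      ↔
    -- for every weak equivalence between objects of `K`, `f_! ⊣ f^*` is a Quillen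
    -- equivalence:
    (∀ ⦃X Y : M⦄ (f : X ⟶ Y), X ∈ K → Y ∈ K → ModelStruct.weq f →
      -- the left adjoint `f_! = Under.pushout f` preserves cofibrations and acyclic
      -- cofibrations (Quillen adjunction):
      (∀ ⦃A A' : Under X⦄ (a : A ⟶ A'),
         (ModelStruct.cof a.right → ModelStruct.cof (((Under.pushout f).map a).right)) ∧
         (ModelStruct.cof a.right → ModelStruct.weq a.right →
            ModelStruct.cof (((Under.pushout f).map a).right) ∧
            ModelStruct.weq (((Under.pushout f).map a).right))) ∧
      -- for every cofibrant `A` in `X ↓ M` and fibrant `B` in `Y ↓ M`, a map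
      -- `f_! A ⟶ B` is a weak equivalence iff its adjunct `A ⟶ f^* B` is one:
      (∀ (A : Under X) (B : Under Y), ModelStruct.cof A.hom →
         ModelStruct.fib (terminal.from B.right) →
         ∀ (g : (Under.pushout f).obj A ⟶ B),
           ModelStruct.weq g.right ↔
           ModelStruct.weq ((((Under.mapPushoutAdj f).homEquiv A B) g).right))) := by
  constructor
  · intro hK X Y f hX hY hf
    refine ⟨fun {A A'} a => ?_, fun A B hA hB g => ?_⟩
    · exact ⟨fun hc => cof_of_isPushout (map_isPushout f a) hc,
             fun hc hw => acof_of_isPushout (map_isPushout f a) hc hw⟩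
    · have hinr : ModelStruct.weq (pushout.inr f A.hom) := hK f A.hom hX hY hf hA
      have hinl : ModelStruct.weq (pushout.inl A.hom f) := by
        have := ModelStruct.weq_comp _ _ hinr
          (weq_of_isIso (pushoutSymmetry f A.hom).hom)
        rwa [inr_comp_pushoutSymmetry_hom] at this
      rw [adjunct_right]
      exact ⟨fun hg => ModelStruct.weq_comp _ _ hinl hg,
             fun hg => ModelStruct.weq_cancel_left _ _ hinl hg⟩
  · intro hQ X Y Z f g hX hY hf hg
    let A : Under X := Under.mk g
    obtain ⟨W, j, p, hjc, hjw, hpf, hjp⟩ :=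
      ModelStruct.factor_acof_fib (terminal.from (pushout g f))
    have hWfib : ModelStruct.fib (terminal.from W) := by
      rwa [Subsingleton.elim (terminal.from W) p]
    let B : Under Y := Under.mk (pushout.inr g f ≫ j)
    let gg : (Under.pushout f).obj A ⟶ B := Under.homMk j (by simp [B, A]; rfl)
    have key := (hQ f hX hY hf).2 A B hg hWfib gg
    rw [adjunct_right] at key
    have hadj : ModelStruct.weq (pushout.inl (Under.mk g).hom f ≫ gg.right) :=
      key.1 (by exact hjw)
    have hadj' : ModelStruct.weq (pushout.inl g f ≫ j) := by exact hadj
    have hinl : ModelStruct.weq (pushout.inl g f) :=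
      ModelStruct.weq_cancel_right _ _ hjw hadj'
    have := ModelStruct.weq_comp _ _ hinl (weq_of_isIso (pushoutSymmetry g f).hom)
    rwa [inl_comp_pushoutSymmetry_hom] at this
end GObjects
end

section
/- Let N be a category with a terminal object * and binary products, equipped with two classes of morphisms Eq and Fib such that Eq contains all identities and satisfies the two-out-of-six property: for composable morphisms f, g, h, if g∘f ∈ Eq and h∘g ∈ Eq then f, g, h and h∘g∘f all lie in Eq. Assume: (fibrant replacement) there exist a functor T : N → N and a natural transformation r : id ⇒ T such that for every object A the map r_A : A → T A lies in Eq and the map T A → * lies in Fib; (path objects) for every object B with B → * in Fib there is a factorization of the diagonal (id, id) : B → B × B as B → Path(B) → B × B with B → Path(B) in Eq and Path(B) → B × B in Fib. Then every morphism of N having the left lifting property with respect to all morphisms of Fib belongs to Eq. -/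
open CategoryTheory CategoryTheory.Limits

universe v u

/-- Quillen's path object argument, cf. Lemma 4.12: let `N` be a
category with a terminal object and binary products, equipped with classes `Eq'` and
`Fib` of morphisms such that `Eq'` contains all identities and satisfies two-out-of-six.
If there is a fibrant replacement functor `(T, r)` and every fibrant object admits a path
object, then every morphism having the left lifting property with respect to all
morphisms of `Fib` belongs to `Eq'`. -/
theorem stmt4 {N : Type u} [Category.{v} N] [HasTerminal N] [HasBinaryProducts N]
    (Eq' Fib : MorphismProperty N)
    -- `Eq'` contains all identities:
    (hid : ∀ X : N, Eq' (𝟙 X))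
    -- two-out-of-six: if `g ∘ f` and `h ∘ g` are in `Eq'` then so are `f`, `g`, `h`
    -- and `h ∘ g ∘ f`:
    (h2of6 : ∀ {A B C D : N} (f : A ⟶ B) (g : B ⟶ C) (h : C ⟶ D),
      Eq' (f ≫ g) → Eq' (g ≫ h) →
      Eq' f ∧ Eq' g ∧ Eq' h ∧ Eq' (f ≫ g ≫ h))
    -- fibrant replacement: a functor `T` with a natural transformation `r : id ⇒ T`
    -- such that each `r_A` is in `Eq'` and each `T A → *` is in `Fib`:
    (T : N ⥤ N) (r : 𝟭 N ⟶ T)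
    (hr_eq : ∀ A : N, Eq' (r.app A))
    (hr_fib : ∀ A : N, Fib (terminal.from (T.obj A)))
    -- path objects: every fibrant `B` has a factorization of the diagonal as a map in
    -- `Eq'` followed by a map in `Fib`:
    (hpath : ∀ B : N, Fib (terminal.from B) →
      ∃ (P : N) (ι : B ⟶ P) (p : P ⟶ B ⨯ B),
        Eq' ι ∧ Fib p ∧ ι ≫ p = prod.lift (𝟙 B) (𝟙 B))
    -- conclusion: any map with the left lifting property against `Fib` is in `Eq'`:
    {X Y : N} (f : X ⟶ Y)
    (hf : ∀ ⦃A B : N⦄ (p : A ⟶ B), Fib p → HasLiftingProperty f p) :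
    Eq' f := by

  obtain ⟨P, ι, p, hι, hp, hfac⟩ := hpath (T.obj Y) (hr_fib Y)
  -- composition closure from 2-of-6
  have comp : ∀ {A B C : N} (a : A ⟶ B) (b : B ⟶ C), Eq' a → Eq' b → Eq' (a ≫ b) := by
    intro A B C a b ha hb
    have := (h2of6 a (𝟙 B) b (by simpa) (by simpa)).2.2.2
    simpa using this
  have t3r : ∀ {A B C : N} (a : A ⟶ B) (b : B ⟶ C), Eq' a → Eq' (a ≫ b) → Eq' b := by
    intro A B C a b ha hab
    exact (h2of6 (𝟙 A) a b (by simpa) hab).2.2.1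
  have t3l : ∀ {A B C : N} (a : A ⟶ B) (b : B ⟶ C), Eq' b → Eq' (a ≫ b) → Eq' a := by
    intro A B C a b hb hab
    exact (h2of6 a b (𝟙 C) hab (by simpa)).1
  haveI := hf (terminal.from (T.obj X)) (hr_fib X)
  have sq1 : CommSq (r.app X) f (terminal.from (T.obj X)) (terminal.from Y) :=
    ⟨Subsingleton.elim _ _⟩
  set g : Y ⟶ T.obj X := sq1.lift with hgdef
  have hg : f ≫ g = r.app X := sq1.fac_left
  haveI := hf p hp
  have nat : f ≫ r.app Y = r.app X ≫ T.map f := r.naturality f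
  have sq2 : CommSq (f ≫ r.app Y ≫ ι) f p (prod.lift (g ≫ T.map f) (r.app Y)) := by
    constructor
    apply Limits.prod.hom_ext <;>
      simp [reassoc_of% hfac, reassoc_of% hg, nat, prod.lift_fst, prod.lift_snd]
  set H : Y ⟶ P := sq2.lift with hHdef
  have hHl : f ≫ H = f ≫ r.app Y ≫ ι := sq2.fac_left
  have hHr : H ≫ p = prod.lift (g ≫ T.map f) (r.app Y) := sq2.fac_right
  have hι1 : Eq' (p ≫ prod.fst) := by
    refine t3r ι _ hι ?_
    have : ι ≫ p ≫ prod.fst = 𝟙 _ := by rw [reassoc_of% hfac]; exact prod.lift_fst _ _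
    rw [this]; exact hid _
  have hι2 : Eq' (p ≫ prod.snd) := by
    refine t3r ι _ hι ?_
    have : ι ≫ p ≫ prod.snd = 𝟙 _ := by rw [reassoc_of% hfac]; exact prod.lift_snd _ _
    rw [this]; exact hid _
  have hH : Eq' H := by
    refine t3l H (p ≫ prod.snd) hι2 ?_
    have : H ≫ p ≫ prod.snd = r.app Y := by rw [reassoc_of% hHr]; exact prod.lift_snd _ _
    rw [this]; exact hr_eq Y
  have hgTf : Eq' (g ≫ T.map f) := by
    have : H ≫ p ≫ prod.fst = g ≫ T.map f := by rw [reassoc_of% hHr]; exact prod.lift_fst _ _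
    rw [← this]
    exact comp H (p ≫ prod.fst) hH hι1
  have hfg : Eq' (f ≫ g) := by rw [hg]; exact hr_eq X
  exact (h2of6 f g (T.map f) hfg hgTf).1
end
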